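/- Let $k > 2$ be an even positive integer and let $n = v_2(k)$ be the $2$-adic valuation of $k$. Then $v_2(m(k)) = v_2\big(m(k, (\mathbb{Z}/2^{n+2}\mathbb{Z})[x])\big)$, where $(\mathbb{Z}/2^{n+2}\mathbb{Z})[x]$ is the polynomial ring over $\mathbb{Z}/2^{n+2}\mathbb{Z}$. -/

import Mathlib

open Polynomial

/-- `J(k,R)`: the additive subgroup of `R` generated by `k`-th powers of elements of `R`. -/
def Jgrp (k : ℕ) (R : Type*) [CommRing R] : AddSubgroup R :=
  AddSubgroup.closure {r : R | ∃ g : R, r = g ^ k}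

/-- `G(k,R) = {m : ℤ | ∀ r : R, m • r ∈ J(k,R)}`, an additive subgroup of `ℤ`
(realized as an ideal of `ℤ`, which has the same underlying set). -/
def Ggrp (k : ℕ) (R : Type*) [CommRing R] : Ideal ℤ where
  carrier := {m : ℤ | ∀ r : R, m • r ∈ Jgrp k R}
  add_mem' := fun {a b} ha hb r => by
    simpa [add_smul] using (Jgrp k R).add_mem (ha r) (hb r)
  zero_mem' := fun r => by simpa using (Jgrp k R).zero_mem
  smul_mem' := fun c m hm r => by
    have h := hm (c • r)
    rw [smul_smul, mul_comm] at h
    simpa [smul_smul] using h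

/-- `m(k,R)`: the nonnegative generator of `G(k,R)`. -/
noncomputable def mval (k : ℕ) (R : Type*) [CommRing R] : ℕ :=
  (Submodule.IsPrincipal.generator (Ggrp k R)).natAbs

open Finset

section Aux

lemma pow_mem_Jgrp {k : ℕ} {R : Type*} [CommRing R] (g : R) : g ^ k ∈ Jgrp k R :=
  AddSubgroup.subset_closure ⟨g, rfl⟩

lemma intCast_mem_Jgrp {k : ℕ} {R : Type*} [CommRing R] (z : ℤ) : (z : R) ∈ Jgrp k R := by
  have : (z : R) = z • (1 : R) ^ k := by simp
  rw [this]
  exact AddSubgroup.zsmul_mem _ (pow_mem_Jgrp 1) z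

lemma Jgrp_map {k : ℕ} {R S : Type*} [CommRing R] [CommRing S] (φ : R →+* S)
    {a : R} (ha : a ∈ Jgrp k R) : φ a ∈ Jgrp k S := by
  have h : Jgrp k R ≤ (Jgrp k S).comap φ.toAddMonoidHom := by
    rw [Jgrp, AddSubgroup.closure_le]
    rintro r ⟨g, rfl⟩
    simpa using pow_mem_Jgrp (φ g)
  exact h ha

lemma Jgrp_surj {k : ℕ} {R S : Type*} [CommRing R] [CommRing S] (φ : R →+* S)
    (hφ : Function.Surjective φ) {b : S} (hb : b ∈ Jgrp k S) :
    ∃ a ∈ Jgrp k R, φ a = b := by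
  have h : Jgrp k S ≤ (Jgrp k R).map φ.toAddMonoidHom := by
    rw [Jgrp, AddSubgroup.closure_le]
    rintro r ⟨g, rfl⟩
    obtain ⟨g', rfl⟩ := hφ g
    exact ⟨g' ^ k, pow_mem_Jgrp g', by simp⟩
  obtain ⟨a, ha, rfl⟩ := h hb
  exact ⟨a, ha, rfl⟩

variable {R : Type*} [CommRing R]

/-- solve `t + 2^(j+1) t^2 = a` mod `2^P`. -/
lemma solve_quad (j P : ℕ) (a : R) : ∃ t u : R, t + 2 ^ (j + 1) * t ^ 2 = a + 2 ^ P * u := by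
  let T : ℕ → R := fun s => Nat.rec a (fun _ ts => a - 2 ^ (j + 1) * ts ^ 2) s
  have hT : ∀ s, T (s + 1) = a - 2 ^ (j + 1) * (T s) ^ 2 := fun s => rfl
  have key : ∀ s : ℕ, ∃ v : R, T (s + 1) - T s = 2 ^ s * v := by
    intro s
    induction s with
    | zero => exact ⟨T (0 + 1) - T 0, by rw [pow_zero, one_mul]⟩
    | succ s ih =>
      obtain ⟨v, hv⟩ := ih
      refine ⟨-(2 ^ j * (v * (T (s + 1) + T s))), ?_⟩
      rw [hT (s + 1), hT s]
      have : (2 : R) ^ (j + 1) = 2 * 2 ^ j := by ring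
      calc a - 2 ^ (j + 1) * T (s + 1) ^ 2 - (a - 2 ^ (j + 1) * T s ^ 2)
          = -(2 ^ (j + 1) * ((T (s + 1) - T s) * (T (s + 1) + T s))) := by ring
        _ = -(2 ^ (j + 1) * ((2 ^ s * v) * (T (s + 1) + T s))) := by rw [hv]
        _ = 2 ^ (s + 1) * -(2 ^ j * (v * (T (s + 1) + T s))) := by ring
  obtain ⟨v, hv⟩ := key P
  refine ⟨T P, -v, ?_⟩
  have h1 : T (P + 1) = a - 2 ^ (j + 1) * (T P) ^ 2 := hT P
  have : T P - (a - 2 ^ (j + 1) * (T P) ^ 2) = 2 ^ P * -v := by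
    rw [← h1]; rw [show T P - T (P + 1) = -(T (P+1) - T P) by ring, hv]; ring
  linear_combination this

/-- every `1 + 2^(n+3) a` is a square mod `2^P`, with root `1 + 2^(n+2) t`. -/
lemma sq_approx (n P : ℕ) (a : R) :
    ∃ t u : R, (1 + 2 ^ (n + 2) * t) ^ 2 = 1 + 2 ^ (n + 3) * a + 2 ^ P * u := by
  obtain ⟨t, u, ht⟩ := solve_quad (j := n) (P := P) (a := a)
  refine ⟨t, 2 ^ (n + 3) * u, ?_⟩
  have : (1 + 2 ^ (n + 2) * t) ^ 2 = 1 + 2 ^ (n + 3) * (t + 2 ^ (n + 1) * t ^ 2) := by ring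
  rw [this, ht]; ring

lemma pow2_approx (n : ℕ) (P : ℕ) : ∀ a : R, ∃ g u : R,
    g ^ (2 ^ n) = 1 + 2 ^ (n + 2) * a + 2 ^ P * u := by
  induction n with
  | zero => exact fun a => ⟨1 + 2 ^ 2 * a, 0, by norm_num⟩
  | succ n ih =>
    intro a
    obtain ⟨t, u₁, ht⟩ := sq_approx (R := R) n P a
    obtain ⟨g, u₂, hg⟩ := ih t
    refine ⟨g, u₁ + (2 * (1 + 2 ^ (n + 2) * t) * u₂ + 2 ^ P * u₂ ^ 2), ?_⟩
    have : g ^ 2 ^ (n + 1) = (g ^ 2 ^ n) ^ 2 := by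
      rw [← pow_mul]; ring_nf
    rw [this, hg]
    have expand : (1 + 2 ^ (n + 2) * t + 2 ^ P * u₂) ^ 2
        = (1 + 2 ^ (n + 2) * t) ^ 2 + 2 ^ P * (2 * (1 + 2 ^ (n + 2) * t) * u₂ + 2 ^ P * u₂ ^ 2) := by
      ring
    rw [expand, ht]
    have : n + 1 + 2 = n + 3 := by ring
    rw [this]; ring

lemma one_add_mul_pow (M e : R) (s : ℕ) : ∃ e' : R, (1 + M * e) ^ s = 1 + M * e' := by
  induction s with
  | zero => exact ⟨0, by simp⟩
  | succ s ih =>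
    obtain ⟨e', he'⟩ := ih
    refine ⟨e' + e + M * (e' * e), ?_⟩
    rw [pow_succ, he']; ring

lemma add_pow_lin (x y : R) (w : ℕ) : ∃ r : R, (x + y) ^ w = x ^ w + y * r := by
  induction w with
  | zero => exact ⟨0, by simp⟩
  | succ w ih =>
    obtain ⟨r, hr⟩ := ih
    refine ⟨x ^ w + r * (x + y), ?_⟩
    rw [pow_succ, hr, pow_succ]; ring

lemma pow_two_pow_one_add (n : ℕ) (a : R) : ∀ L : ℕ, ∃ e : R,
    (1 + 2 ^ (n + 2) * a) ^ (2 ^ L) = 1 + 2 ^ (n + 2 + L) * e := by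
  intro L
  induction L with
  | zero => exact ⟨a, by norm_num⟩
  | succ L ih =>
    obtain ⟨e, he⟩ := ih
    refine ⟨e + 2 ^ (n + 1 + L) * e ^ 2, ?_⟩
    have h1 : (1 + 2 ^ (n + 2) * a) ^ 2 ^ (L + 1) = ((1 + 2 ^ (n + 2) * a) ^ 2 ^ L) ^ 2 := by
      rw [← pow_mul, pow_succ 2 L]
    rw [h1, he]
    have h2 : n + 2 + (L + 1) = (n + 2 + L) + 1 := by ring
    rw [h2]
    have h3 : (2:R) ^ (n + 2 + L) * 2 ^ (n + 2 + L) = 2 ^ ((n + 2 + L) + 1) * 2 ^ (n + 1 + L) := by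
      rw [← pow_add, ← pow_add]
      congr 1
      ring
    calc (1 + 2 ^ (n + 2 + L) * e) ^ 2
        = 1 + 2 ^ ((n + 2 + L) + 1) * e + (2 ^ (n + 2 + L) * 2 ^ (n + 2 + L)) * e ^ 2 := by ring
      _ = 1 + 2 ^ ((n + 2 + L) + 1) * (e + 2 ^ (n + 1 + L) * e ^ 2) := by rw [h3]; ring

lemma odd_root_approx (w : ℕ) (hw : Odd w) (n P : ℕ) (hP : 1 ≤ P) (a : R) :
    ∃ b u : R, (1 + 2 ^ (n + 2) * b) ^ w = 1 + 2 ^ (n + 2) * a + 2 ^ P * u := by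
  have hcop : Nat.Coprime w (2 ^ P) := by
    refine Nat.Coprime.pow_right _ ?_
    have : ¬ (2 ∣ w) := by
      rw [Nat.odd_iff] at hw
      omega
    exact (Nat.coprime_comm.mp ((Nat.prime_two.coprime_iff_not_dvd).mpr this))
  have h2P : 1 < 2 ^ P := by
    calc 1 < 2 ^ 1 := by norm_num
    _ ≤ 2 ^ P := Nat.pow_le_pow_right (by norm_num) hP
  obtain ⟨W, -, hW⟩ := Nat.exists_mul_mod_eq_one_of_coprime hcop h2P
  set c : R := 1 + 2 ^ (n + 2) * a with hc
  obtain ⟨b, hb⟩ := one_add_mul_pow ((2:R) ^ (n + 2)) a W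
  refine ⟨b, ?_⟩
  have hWw : w * W = 2 ^ P * (w * W / 2 ^ P) + 1 := by
    have := Nat.div_add_mod (w * W) (2 ^ P)
    omega
  set s := w * W / 2 ^ P with hs
  obtain ⟨e, he⟩ := pow_two_pow_one_add n a P
  obtain ⟨e', he'⟩ := one_add_mul_pow ((2:R) ^ (n + 2 + P)) e s
  refine ⟨2 ^ (n + 2) * (e' * c), ?_⟩
  have key : (1 + 2 ^ (n + 2) * b) ^ w = c ^ (w * W) := by
    rw [← hb, ← pow_mul, mul_comm W w]
  rw [key, hWw, pow_add, pow_one, pow_mul, he, he']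
  rw [hc]
  have : (2:R) ^ (n + 2 + P) = 2 ^ P * 2 ^ (n + 2) := by
    rw [← pow_add]; congr 1; ring
  rw [this]; ring

lemma kth_power_approx {k n w : ℕ} (hkf : k = 2 ^ n * w) (hw : Odd w) {P : ℕ} (hP : 1 ≤ P)
    (a : R) : ∃ g u : R, g ^ k = 1 + 2 ^ (n + 2) * a + 2 ^ P * u := by
  obtain ⟨b, u₀, hbu⟩ := odd_root_approx (R := R) w hw n P hP a
  obtain ⟨g, u₁, hg⟩ := pow2_approx (R := R) n P b
  obtain ⟨r, hr⟩ := add_pow_lin (R := R) (1 + 2 ^ (n + 2) * b) (2 ^ P * u₁) w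
  refine ⟨g, u₀ + u₁ * r, ?_⟩
  have h1 : g ^ k = (g ^ 2 ^ n) ^ w := by rw [← pow_mul, hkf]
  rw [h1, hg]
  rw [show (1:R) + 2 ^ (n + 2) * b + 2 ^ P * u₁ = (1 + 2 ^ (n + 2) * b) + 2 ^ P * u₁ by ring]
  rw [hr, hbu]; ring

/-- alternating moment sums -/
def Tsum (d i : ℕ) : ℤ :=
  ∑ j ∈ Finset.range (d + 1), (-1 : ℤ) ^ j * (d.choose j : ℤ) * (j : ℤ) ^ i

lemma Tsum_succ (d i : ℕ) :
    Tsum (d + 1) i = Tsum d i - ∑ t ∈ Finset.range (i + 1), (i.choose t : ℤ) * Tsum d t := by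
  have peel : Tsum (d + 1) i
      = (∑ j ∈ range (d + 1), (-1 : ℤ) ^ (j+1) * ((d+1).choose (j+1) : ℤ) * ((j:ℤ)+1) ^ i)
        + (0:ℤ) ^ i := by
    rw [Tsum, Finset.sum_range_succ']
    have h1 : ∀ j ∈ range (d+1), (-1 : ℤ) ^ (j+1) * ((d+1).choose (j+1) : ℤ) * (((j+1 : ℕ)):ℤ) ^ i
        = (-1 : ℤ) ^ (j+1) * ((d+1).choose (j+1) : ℤ) * ((j:ℤ)+1) ^ i := by
      intro j _
      push_cast
      ring
    rw [Finset.sum_congr rfl h1]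
    simp
  have hAB : (∑ j ∈ range (d + 1), (-1 : ℤ) ^ (j+1) * ((d+1).choose (j+1) : ℤ) * ((j:ℤ)+1) ^ i)
      = (∑ j ∈ range (d + 1), (-1 : ℤ) ^ (j+1) * (d.choose j : ℤ) * ((j:ℤ)+1) ^ i)
        + (∑ j ∈ range (d + 1), (-1 : ℤ) ^ (j+1) * (d.choose (j+1) : ℤ) * ((j:ℤ)+1) ^ i) := by
    rw [← Finset.sum_add_distrib]
    apply Finset.sum_congr rfl
    intro j _
    rw [Nat.choose_succ_succ]
    push_cast
    ring
  have hsecond : (∑ j ∈ range (d + 1), (-1 : ℤ) ^ (j+1) * (d.choose (j+1) : ℤ) * ((j:ℤ)+1) ^ i)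
      + (0:ℤ) ^ i = Tsum d i := by
    conv_rhs => rw [Tsum, Finset.sum_range_succ']
    rw [Finset.sum_range_succ]
    have hlast : (-1 : ℤ) ^ (d+1) * (d.choose (d+1) : ℤ) * ((d:ℤ)+1) ^ i = 0 := by
      rw [Nat.choose_succ_self]
      push_cast
      ring
    rw [hlast, add_zero]
    have h1 : ∀ j ∈ range d, (-1 : ℤ) ^ (j+1) * (d.choose (j+1) : ℤ) * ((j:ℤ)+1) ^ i
        = (-1 : ℤ) ^ (j+1) * (d.choose (j+1) : ℤ) * (((j+1 : ℕ)):ℤ) ^ i := by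
      intro j _
      push_cast
      ring
    rw [Finset.sum_congr rfl h1]
    simp
  have hfirst : (∑ j ∈ range (d + 1), (-1 : ℤ) ^ (j+1) * (d.choose j : ℤ) * ((j:ℤ)+1) ^ i)
      = - ∑ t ∈ Finset.range (i + 1), (i.choose t : ℤ) * Tsum d t := by
    have expand : ∀ j : ℕ, ((j:ℤ)+1) ^ i = ∑ t ∈ range (i + 1), (j:ℤ) ^ t * (i.choose t : ℤ) := by
      intro j
      rw [add_pow]
      apply Finset.sum_congr rfl
      intro t _
      ring
    calc (∑ j ∈ range (d + 1), (-1 : ℤ) ^ (j+1) * (d.choose j : ℤ) * ((j:ℤ)+1) ^ i)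
        = ∑ j ∈ range (d + 1), ∑ t ∈ range (i+1),
            (i.choose t : ℤ) * (-((-1 : ℤ) ^ j * (d.choose j : ℤ) * (j:ℤ) ^ t)) := by
          apply Finset.sum_congr rfl
          intro j _
          rw [expand j, Finset.mul_sum]
          apply Finset.sum_congr rfl
          intro t _
          ring
      _ = ∑ t ∈ range (i+1), ∑ j ∈ range (d + 1),
            (i.choose t : ℤ) * (-((-1 : ℤ) ^ j * (d.choose j : ℤ) * (j:ℤ) ^ t)) :=
          Finset.sum_comm
      _ = - ∑ t ∈ Finset.range (i + 1), (i.choose t : ℤ) * Tsum d t := by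
          rw [← Finset.sum_neg_distrib]
          apply Finset.sum_congr rfl
          intro t _
          rw [Tsum, Finset.mul_sum, ← Finset.sum_neg_distrib]
          apply Finset.sum_congr rfl
          intro j _
          ring
  calc Tsum (d+1) i
      = (∑ j ∈ range (d + 1), (-1 : ℤ) ^ (j+1) * (d.choose j : ℤ) * ((j:ℤ)+1) ^ i)
        + ((∑ j ∈ range (d + 1), (-1 : ℤ) ^ (j+1) * (d.choose (j+1) : ℤ) * ((j:ℤ)+1) ^ i)
          + (0:ℤ) ^ i) := by rw [peel, hAB]; ring
    _ = Tsum d i - ∑ t ∈ Finset.range (i + 1), (i.choose t : ℤ) * Tsum d t := by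
          rw [hsecond, hfirst]; ring

lemma Tsum_spec : ∀ d : ℕ, (∀ i : ℕ, i < d → Tsum d i = 0)
    ∧ Tsum d d = (-1) ^ d * (d.factorial : ℤ) := by
  intro d
  induction d with
  | zero =>
    constructor
    · intro i hi; omega
    · simp [Tsum]
  | succ d ih =>
    obtain ⟨ih0, ihd⟩ := ih
    have hlow : ∀ i : ℕ, i < d + 1 → Tsum (d+1) i = 0 := by
      intro i hi
      rw [Tsum_succ]
      have hsum : ∑ t ∈ Finset.range (i + 1), (i.choose t : ℤ) * Tsum d t
          = (i.choose i : ℤ) * Tsum d i := by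
        rw [Finset.sum_range_succ]
        rw [Finset.sum_eq_zero, zero_add]
        intro t ht
        rw [ih0 t (by simp at ht; omega), mul_zero]
      rw [hsum, Nat.choose_self]
      push_cast
      ring
    refine ⟨hlow, ?_⟩
    rw [Tsum_succ]
    have hsum : ∑ t ∈ Finset.range (d + 1 + 1), ((d+1).choose t : ℤ) * Tsum d t
        = ((d+1).choose d : ℤ) * Tsum d d + ((d+1).choose (d+1) : ℤ) * Tsum d (d+1) := by
      rw [Finset.sum_range_succ, Finset.sum_range_succ]
      rw [Finset.sum_eq_zero, zero_add]
      intro t ht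
      rw [ih0 t (by simp at ht; omega), mul_zero]
    rw [hsum, Nat.choose_self, Nat.choose_succ_self_right, ihd]
    push_cast [Nat.factorial_succ]
    ring

lemma exists_K (k : ℕ) (hk : 0 < k) : ∃ K : ℕ, 0 < K ∧
    ∀ f : Polynomial ℤ, (K : Polynomial ℤ) * f ∈ Jgrp k (Polynomial ℤ) := by
  classical
  set S : Polynomial ℤ :=
    ∑ j ∈ Finset.range k, C ((-1:ℤ)^j * ((k-1).choose j : ℤ)) * (X + C (j:ℤ)) ^ k with hS
  have hSmem : S ∈ Jgrp k (Polynomial ℤ) := by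
    apply AddSubgroup.sum_mem
    intro j _
    have : C ((-1:ℤ)^j * ((k-1).choose j : ℤ)) * (X + C (j:ℤ)) ^ k
        = ((-1:ℤ)^j * ((k-1).choose j : ℤ)) • ((X + C (j:ℤ)) ^ k) := by
      rw [zsmul_eq_mul, ← Polynomial.C_eq_intCast, Int.cast_id]
    rw [this]
    exact AddSubgroup.zsmul_mem _ (pow_mem_Jgrp _) _
  have hcoeff : ∀ t : ℕ, S.coeff t = (k.choose t : ℤ) * Tsum (k-1) (k-t) := by
    intro t
    rw [hS, Polynomial.finset_sum_coeff, Tsum, Finset.mul_sum]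
    have hk1 : k - 1 + 1 = k := by omega
    rw [hk1]
    apply Finset.sum_congr rfl
    intro j _
    rw [Polynomial.coeff_C_mul, Polynomial.coeff_X_add_C_pow]
    ring
  have hhigh : ∀ t : ℕ, 1 < t → S.coeff t = 0 := by
    intro t ht
    rw [hcoeff t]
    by_cases htk : t ≤ k
    · rw [(Tsum_spec (k-1)).1 (k-t) (by omega), mul_zero]
    · rw [Nat.choose_eq_zero_of_lt (by omega)]
      push_cast
      ring
  have hdeg : S.natDegree ≤ 1 := Polynomial.natDegree_le_iff_coeff_eq_zero.mpr hhigh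
  have hSeq : S = C (S.coeff 1) * X + C (S.coeff 0) :=
    Polynomial.eq_X_add_C_of_natDegree_le_one hdeg
  have hc1 : S.coeff 1 = (-1:ℤ)^(k-1) * ((k-1).factorial : ℤ) * (k : ℤ) := by
    rw [hcoeff 1, (Tsum_spec (k-1)).2, Nat.choose_one_right]
    ring
  refine ⟨k * (k-1).factorial, by positivity, ?_⟩
  intro f
  set φ : Polynomial ℤ →+* Polynomial ℤ := (Polynomial.aeval f).toRingHom with hφ
  have hφS : φ S ∈ Jgrp k (Polynomial ℤ) := Jgrp_map φ hSmem
  have hφSeq : φ S = C (S.coeff 1) * f + C (S.coeff 0) := by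
    rw [hφ]
    conv_lhs => rw [hSeq]
    have hz : ∀ z : ℤ, algebraMap ℤ (Polynomial ℤ) z = C z := fun z => by
      rw [eq_intCast]
      exact_mod_cast (Polynomial.C_eq_intCast z).symm
    simp only [AlgHom.toRingHom_eq_coe, RingHom.coe_coe, map_add, map_mul,
      Polynomial.aeval_X, Polynomial.aeval_C, hz]
  have hmem1 : C (S.coeff 1) * f ∈ Jgrp k (Polynomial ℤ) := by
    have := (Jgrp k (Polynomial ℤ)).sub_mem hφS (intCast_mem_Jgrp (S.coeff 0))
    rw [hφSeq] at this
    rw [show C (S.coeff 1) * f + C (S.coeff 0) - ((S.coeff 0 : ℤ) : Polynomial ℤ)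
        = C (S.coeff 1) * f by rw [← Polynomial.C_eq_intCast, Int.cast_id]; ring] at this
    exact this
  rcases Nat.even_or_odd (k-1) with hpar | hpar
  · have hcast : ((k * (k-1).factorial : ℕ) : Polynomial ℤ) = C (S.coeff 1) := by
      rw [hc1, hpar.neg_one_pow, one_mul, ← Polynomial.C_eq_natCast]
      congr 1
      push_cast
      ring
    rw [hcast]
    exact hmem1
  · have hcast : ((k * (k-1).factorial : ℕ) : Polynomial ℤ) = - C (S.coeff 1) := by
      rw [hc1, hpar.neg_one_pow, ← Polynomial.C_eq_natCast, ← Polynomial.C_neg]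
      congr 1
      push_cast
      ring
    rw [show ((k * (k-1).factorial : ℕ) : Polynomial ℤ) * f = -(C (S.coeff 1) * f) by
      rw [hcast]; ring]
    exact (Jgrp k (Polynomial ℤ)).neg_mem hmem1

end Aux

lemma mem_Ggrp {k : ℕ} {R : Type*} [CommRing R] {z : ℤ} :
    z ∈ Ggrp k R ↔ ∀ r : R, z • r ∈ Jgrp k R := Iff.rfl

/-- For `k > 2` even with `n = v₂(k)`, we have
`v₂(m(k)) = v₂(m(k, (ℤ/2^(n+2)ℤ)[x]))`. -/
theorem v2_mval_eq_v2_mval_zmod (k : ℕ) (hk : 2 < k) (hke : Even k)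
    (n : ℕ) (hn : n = padicValNat 2 k) :
    padicValNat 2 (mval k (Polynomial ℤ)) =
      padicValNat 2 (mval k (Polynomial (ZMod (2 ^ (n + 2))))) := by
  classical
  set q : ℕ := 2 ^ (n + 2) with hq
  set R' := Polynomial (ZMod q) with hR'
  set π : Polynomial ℤ →+* R' := Polynomial.mapRingHom (Int.castRingHom (ZMod q)) with hπ
  have hπsurj : Function.Surjective π := Polynomial.map_surjective _ ZMod.intCast_surjective
  set I : Ideal ℤ := Ggrp k (Polynomial ℤ) with hI
  set I' : Ideal ℤ := Ggrp k R' with hI'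
  set g₀ : ℤ := Submodule.IsPrincipal.generator I with hg₀
  set g₁ : ℤ := Submodule.IsPrincipal.generator I' with hg₁
  have hk0 : k ≠ 0 := by omega
  -- split k = 2^n * w
  have hfac : k.factorization 2 = n := by rw [Nat.factorization_def k Nat.prime_two, hn]
  set w : ℕ := k / 2 ^ n with hw
  have hord : ordCompl[2] k = w := by rw [hfac]
  have hksplit : k = 2 ^ n * w := by
    have h1 := Nat.ordProj_mul_ordCompl_eq_self k 2
    rw [hord, hfac] at h1
    exact h1.symm
  have hwodd : Odd w := by
    have h2 : ¬ (2 ∣ w) := by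
      have := Nat.not_dvd_ordCompl Nat.prime_two hk0
      rwa [hord] at this
    rcases Nat.even_or_odd w with he | ho
    · exact absurd he.two_dvd h2
    · exact ho
  -- Step A : I ≤ I'
  have hsub : I ≤ I' := by
    intro z hz
    rw [hI', mem_Ggrp]
    intro r'
    obtain ⟨f, rfl⟩ := hπsurj r'
    have h1 : π (z • f) ∈ Jgrp k R' := Jgrp_map π (hz f)
    rwa [map_zsmul] at h1
  have hdvd10 : g₁ ∣ g₀ :=
    (Submodule.IsPrincipal.mem_iff_generator_dvd I').mp
      (hsub (Submodule.IsPrincipal.generator_mem I))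
  -- Step B : nonzeroness via exists_K
  obtain ⟨K, hK0, hKmem⟩ := exists_K k (by omega)
  have hKI : (K : ℤ) ∈ I := by
    rw [hI, mem_Ggrp]
    intro f
    have h1 := hKmem f
    rwa [show ((K:ℕ) : Polynomial ℤ) * f = (K : ℤ) • f by
      rw [zsmul_eq_mul]; push_cast; ring] at h1
  have hg₀dvdK : g₀ ∣ (K : ℤ) := (Submodule.IsPrincipal.mem_iff_generator_dvd I).mp hKI
  have hg₀ne : g₀ ≠ 0 := by
    intro h0
    rw [h0, zero_dvd_iff] at hg₀dvdK
    have hKne : (K : ℤ) ≠ 0 := by exact_mod_cast hK0.ne'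
    exact hKne hg₀dvdK
  -- odd part of K
  set e : ℕ := (K : ℕ).factorization 2 with he
  set K₁ : ℕ := ordCompl[2] K with hK₁
  have hKsplit : K = 2 ^ e * K₁ := (Nat.ordProj_mul_ordCompl_eq_self K 2).symm
  have hK₁odd : ¬ (2 ∣ K₁) := Nat.not_dvd_ordCompl Nat.prime_two (by omega)
  have hK₁pos : 0 < K₁ := Nat.ordCompl_pos 2 (by omega)
  -- Step C : K₁ * m' ∈ I
  have hC : ((g₁.natAbs * K₁ : ℕ) : ℤ) ∈ I := by
    rw [hI, mem_Ggrp]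
    intro f
    have hg₁mem : ((g₁.natAbs : ℤ)) ∈ I' := by
      rcases Int.natAbs_eq g₁ with h | h
      · rw [← h]; exact Submodule.IsPrincipal.generator_mem I'
      · have : ((g₁.natAbs : ℤ)) = -g₁ := by omega
        rw [this]; exact I'.neg_mem (Submodule.IsPrincipal.generator_mem I')
    have hJm : (g₁.natAbs : ℤ) • (π f) ∈ Jgrp k R' := hg₁mem (π f)
    obtain ⟨S, hSJ, hSeq⟩ := Jgrp_surj π hπsurj hJm
    have hπ0 : π ((g₁.natAbs : ℤ) • f - S) = 0 := by
      rw [map_sub, map_zsmul, hSeq, sub_self]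
    have hdvdcoeff : ∀ i, ((2:ℤ) ^ (n + 2)) ∣ ((g₁.natAbs : ℤ) • f - S).coeff i := by
      intro i
      have hπ0' : ((g₁.natAbs : ℤ) • f - S).map (Int.castRingHom (ZMod q)) = 0 := hπ0
      have h0 := congrArg (fun p => Polynomial.coeff p i) hπ0'
      simp only [Polynomial.coeff_map, Polynomial.coeff_zero, eq_intCast] at h0
      have h2 := (ZMod.intCast_zmod_eq_zero_iff_dvd _ q).mp h0
      rw [hq] at h2
      exact_mod_cast h2
    obtain ⟨h, hh⟩ := (Polynomial.C_dvd_iff_dvd_coeff _ _).mpr hdvdcoeff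
    -- use the k-th power approximation with precision P = e + (n+2)
    obtain ⟨g, u, hgu⟩ := kth_power_approx (R := Polynomial ℤ) hksplit hwodd
      (P := e + (n + 2)) (by omega) h
    have hC2 : (Polynomial.C ((2:ℤ)^(n+2)) : Polynomial ℤ) = 2 ^ (n + 2) := by
      have h3 := Polynomial.C_eq_intCast (R := ℤ) (2 ^ (n + 2))
      push_cast at h3 ⊢
      exact h3
    have hKc : ((K:ℕ) : Polynomial ℤ) = (2:Polynomial ℤ) ^ e * ((K₁:ℕ) : Polynomial ℤ) := by
      rw [hKsplit]; push_cast; ring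
    have hkey : (K₁ : ℤ) • ((2:Polynomial ℤ) ^ (n+2) * h) ∈ Jgrp k (Polynomial ℤ) := by
      have t1 : (K₁ : ℤ) • g ^ k ∈ Jgrp k (Polynomial ℤ) :=
        AddSubgroup.zsmul_mem _ (pow_mem_Jgrp g) _
      have t2 : (((K₁:ℤ)) : Polynomial ℤ) ∈ Jgrp k (Polynomial ℤ) := intCast_mem_Jgrp _
      have t3 : ((K:ℕ) : Polynomial ℤ) * (2 ^ (n+2) * u) ∈ Jgrp k (Polynomial ℤ) := hKmem _
      have hid : (K₁ : ℤ) • ((2:Polynomial ℤ) ^ (n+2) * h)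
          = (K₁ : ℤ) • g ^ k - (((K₁:ℤ)) : Polynomial ℤ)
            - ((K:ℕ) : Polynomial ℤ) * (2 ^ (n+2) * u) := by
        rw [zsmul_eq_mul, zsmul_eq_mul, hKc]
        have hE : (2 : Polynomial ℤ) ^ (e + (n + 2)) = 2 ^ e * 2 ^ (n + 2) := pow_add 2 e (n+2)
        push_cast
        linear_combination (-((K₁:ℕ) : Polynomial ℤ)) * hgu
          + (((K₁:ℕ) : Polynomial ℤ) * u) * hE
      rw [hid]
      exact AddSubgroup.sub_mem _ (AddSubgroup.sub_mem _ t1 t2) t3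
    have hfinal : ((g₁.natAbs * K₁ : ℕ) : ℤ) • f
        = (K₁ : ℤ) • S + (K₁ : ℤ) • ((2:Polynomial ℤ) ^ (n+2) * h) := by
      have hh' : (g₁.natAbs : ℤ) • f - S = Polynomial.C ((2:ℤ)^(n+2)) * h := hh
      rw [hC2] at hh'
      rw [zsmul_eq_mul] at hh'
      rw [zsmul_eq_mul, zsmul_eq_mul, zsmul_eq_mul]
      push_cast
      push_cast at hh'
      linear_combination ((K₁:ℕ) : Polynomial ℤ) * hh'
    rw [hfinal]
    exact AddSubgroup.add_mem _ (AddSubgroup.zsmul_mem _ hSJ _) hkey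
  have hdvd01 : g₀ ∣ ((g₁.natAbs * K₁ : ℕ) : ℤ) :=
    (Submodule.IsPrincipal.mem_iff_generator_dvd I).mp hC
  -- wrap up with valuations
  have hm'm : mval k R' ∣ mval k (Polynomial ℤ) := Int.natAbs_dvd_natAbs.mpr hdvd10
  have hmm' : mval k (Polynomial ℤ) ∣ mval k R' * K₁ := by
    have h1 : g₀.natAbs ∣ ((g₁.natAbs * K₁ : ℕ) : ℤ).natAbs := Int.natAbs_dvd_natAbs.mpr hdvd01
    rwa [Int.natAbs_natCast] at h1
  have hmne : mval k (Polynomial ℤ) ≠ 0 := by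
    simpa [mval, Int.natAbs_eq_zero] using hg₀ne
  have hm'ne : mval k R' ≠ 0 := by
    intro h0
    rw [h0] at hm'm
    exact hmne (zero_dvd_iff.mp hm'm)
  haveI : Fact (Nat.Prime 2) := ⟨Nat.prime_two⟩
  apply le_antisymm
  · -- v2 m ≤ v2 m'
    obtain ⟨c, hc⟩ := hmm'
    have hcne : c ≠ 0 := by
      intro h0; rw [h0, mul_zero] at hc; exact absurd hc (by positivity)
    calc padicValNat 2 (mval k (Polynomial ℤ))
        ≤ padicValNat 2 (mval k (Polynomial ℤ)) + padicValNat 2 c := Nat.le_add_right _ _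
      _ = padicValNat 2 (mval k (Polynomial ℤ) * c) := (padicValNat.mul (by omega) hcne).symm
      _ = padicValNat 2 (mval k R' * K₁) := by rw [← hc]
      _ = padicValNat 2 (mval k R') + padicValNat 2 K₁ := padicValNat.mul hm'ne (by omega)
      _ = padicValNat 2 (mval k R') := by
          rw [padicValNat.eq_zero_of_not_dvd hK₁odd, add_zero]
  · -- v2 m' ≤ v2 m
    obtain ⟨c, hc⟩ := hm'm
    have hcne : c ≠ 0 := by
      intro h0; rw [h0, mul_zero] at hc; exact hmne hc
    calc padicValNat 2 (mval k R')
        ≤ padicValNat 2 (mval k R') + padicValNat 2 c := Nat.le_add_right _ _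
      _ = padicValNat 2 (mval k R' * c) := (padicValNat.mul hm'ne hcne).symm
      _ = padicValNat 2 (mval k (Polynomial ℤ)) := by rw [← hc]
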